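/- arXiv:2109.03208 — 5 statements merged into one kernel-verified Lean document; each statement's English description precedes it below -/
import Mathlib

section
/- Let V be a finite-dimensional real inner product space, U ⊆ V convex and compact (not a singleton), X a set, f : X × U → ℝ affine in the second argument, and p̂ ∈ relint(U). A robustly optimal x* ∈ X is Pareto robustly optimal (i.e., no y ∈ X Pareto dominates it) if and only if x* is an optimal solution of the problem: maximize f(y,p̂) over y ∈ X subject to f(y,p) ≥ f(x*,p) for all p ∈ U. -/
open Topology AffineMap

theorem exists_mem_openSegment_of_mem_intrinsicInterior {V : Type*} [NormedAddCommGroup V]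
    [NormedSpace ℝ V] {U : Set V} {z q : V} (hz : z ∈ intrinsicInterior ℝ U) (hq : q ∈ U) :
    ∃ p ∈ U, z ∈ openSegment ℝ p q := by
  obtain ⟨z', hz'U, rfl⟩ := hz
  -- Prolong the segment from `q` through `z` slightly beyond `z`; relative interiority keeps the
  -- endpoint in `U`.
  let γ : ℝ → affineSpan ℝ U := fun t ↦
    ⟨lineMap q z' t, lineMap_mem t (subset_affineSpan ℝ U hq) z'.2⟩
  have hγ : Continuous γ := by fun_prop
  have hγ1 : γ 1 = z' := Subtype.ext (lineMap_apply_one _ _)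
  have hnear : ∀ᶠ t in 𝓝[>] (1 : ℝ), γ t ∈ ((↑) ⁻¹' U : Set (affineSpan ℝ U)) :=
    nhdsWithin_le_nhds <| (hγ.tendsto 1).eventually <| mem_interior_iff_mem_nhds.1 (hγ1 ▸ hz'U)
  obtain ⟨t, htU, ht1 : 1 < t⟩ := (hnear.and self_mem_nhdsWithin).exists
  refine ⟨γ t, htU, openSegment_symm ℝ q _ ▸ openSegment_eq_image_lineMap ℝ q _ ▸
    ⟨t⁻¹, ⟨inv_pos.2 (by linarith), inv_lt_one_of_one_lt₀ ht1⟩, ?_⟩⟩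
  simp [γ, inv_mul_cancel₀ (by linarith : t ≠ 0)]

theorem AffineMap.apply_lt_apply_of_mem_openSegment {𝕜 E : Type*} [Field 𝕜] [LinearOrder 𝕜]
    [IsStrictOrderedRing 𝕜] [AddCommGroup E] [Module 𝕜 E] {g h : E →ᵃ[𝕜] 𝕜} {p q z : E}
    (hp : g p ≤ h p) (hq : g q < h q) (hz : z ∈ openSegment 𝕜 p q) : g z < h z := by
  obtain ⟨a, b, ha, hb, hab, rfl⟩ := hz
  rw [Convex.combo_affine_apply hab, Convex.combo_affine_apply hab]
  exact add_lt_add_of_le_of_lt (mul_le_mul_of_nonneg_left hp ha.le)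
    (mul_lt_mul_of_pos_left hq hb)

theorem pro_iff_optimal_aux_general
    {V : Type*} [NormedAddCommGroup V] [InnerProductSpace ℝ V]
    {X : Type*} (U : Set V)
    (f : X → V → ℝ)
    (haff : ∀ x : X, ∃ g : V →ᵃ[ℝ] ℝ, ∀ p ∈ U, f x p = g p)
    (phat : V) (hphat : phat ∈ intrinsicInterior ℝ U)
    (xstar : X) :
    (¬ ∃ y : X, (∀ p ∈ U, f xstar p ≤ f y p) ∧ ∃ pbar ∈ U, f xstar pbar < f y pbar)
      ↔ (∀ y : X, (∀ p ∈ U, f xstar p ≤ f y p) → f y phat ≤ f xstar phat) := by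
  have hphatU : phat ∈ U := intrinsicInterior_subset hphat
  refine ⟨fun hPRO y hy ↦ not_lt.1 fun hlt ↦ hPRO ⟨y, hy, phat, hphatU, hlt⟩, ?_⟩
  rintro hopt ⟨y, hy, pbar, hpbar, hlt⟩
  -- `p̂` lies strictly between `p̄` and some `p ∈ U`, so the strict gain at `p̄` survives at `p̂`.
  obtain ⟨p, hp, hseg⟩ := exists_mem_openSegment_of_mem_intrinsicInterior hphat hpbar
  obtain ⟨gx, hgx⟩ := haff xstar
  obtain ⟨gy, hgy⟩ := haff y
  have hgain : gx phat < gy phat := by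
    refine gx.apply_lt_apply_of_mem_openSegment ?_ ?_ hseg
    · simpa only [hgx p hp, hgy p hp] using hy p hp
    · simpa only [hgx pbar hpbar, hgy pbar hpbar] using hlt
  rw [← hgx phat hphatU, ← hgy phat hphatU] at hgain
  exact (hopt y hy).not_gt hgain

/-- A robustly optimal `x*` is Pareto robustly optimal iff it is
optimal for the auxiliary problem `max f(y,p̂) s.t. f(y,·) ≥ f(x*,·) on U`. -/
theorem pro_iff_optimal_aux
    {V : Type*} [NormedAddCommGroup V] [InnerProductSpace ℝ V] [FiniteDimensional ℝ V]
    {X : Type*} (U : Set V) (hUconv : Convex ℝ U) (hUcomp : IsCompact U)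
    (hUnotsingleton : ∀ p : V, U ≠ {p})
    (f : X → V → ℝ)
    (haff : ∀ x : X, ∃ g : V →ᵃ[ℝ] ℝ, ∀ p ∈ U, f x p = g p)
    (phat : V) (hphat : phat ∈ intrinsicInterior ℝ U)
    (xstar : X)
    (hRO : ∀ x : X, sInf (f x '' U) ≤ sInf (f xstar '' U)) :
    (¬ ∃ y : X, (∀ p ∈ U, f xstar p ≤ f y p) ∧ ∃ pbar ∈ U, f xstar pbar < f y pbar)
      ↔ (∀ y : X, (∀ p ∈ U, f xstar p ≤ f y p) → f y phat ≤ f xstar phat) :=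
  pro_iff_optimal_aux_general U f haff phat hphat xstar
end

section
/- Let V be a finite-dimensional real inner product space, U ⊆ V convex and compact, X a set, f : X × U → ℝ affine in the second argument, p̂ ∈ relint(U), and x* robustly optimal. Any optimal solution y* of the problem 'maximize f(y,p̂) over y ∈ X subject to f(y,p) ≥ f(x*,p) for all p ∈ U' is Pareto robustly optimal. -/
/-!
If `y` dominates an optimal solution `y*` of the auxiliary problem, then `y` is feasible for it,
so `f(y, p̂) = f(y*, p̂)`. The affine function `f(y, ·) - f(y*, ·)` is then nonnegative on `U` and
vanishes at the relative interior point `p̂`; an affine function attaining its minimum over `U` at a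
relative interior point is constant on `U`, so `y` cannot improve on `y*` anywhere.
-/

open Set Filter Topology

section IntrinsicInterior

variable {V : Type*} [AddCommGroup V] [Module ℝ V] [TopologicalSpace V] [IsTopologicalAddGroup V]
  [ContinuousSMul ℝ V] {U : Set V} {p q : V}

theorem exists_one_lt_lineMap_mem_of_mem_intrinsicInterior (hp : p ∈ intrinsicInterior ℝ U)
    (hq : q ∈ U) : ∃ t : ℝ, 1 < t ∧ AffineMap.lineMap q p t ∈ U := by
  obtain ⟨p', hp', rfl⟩ := mem_intrinsicInterior.mp hp
  let line : ℝ → affineSpan ℝ U := fun t =>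
    ⟨AffineMap.lineMap q p' t, AffineMap.lineMap_mem t (subset_affineSpan ℝ U hq) p'.2⟩
  have hline : Continuous line := AffineMap.lineMap_continuous.subtype_mk _
  have hline_one : line 1 = p' := Subtype.ext (AffineMap.lineMap_apply_one _ _)
  have hnear : ∀ᶠ t in 𝓝[>] (1 : ℝ), line t ∈ interior ((↑) ⁻¹' U) :=
    nhdsWithin_le_nhds <| hline.continuousAt.preimage_mem_nhds <|
      isOpen_interior.mem_nhds (hline_one ▸ hp')
  obtain ⟨t, hint, ht⟩ := (hnear.and self_mem_nhdsWithin).exists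
  exact ⟨t, ht, interior_subset (s := ((↑) : affineSpan ℝ U → V) ⁻¹' U) hint⟩

theorem AffineMap.eq_of_isMinOn_of_mem_intrinsicInterior (g : V →ᵃ[ℝ] ℝ) (hmin : IsMinOn g U p)
    (hp : p ∈ intrinsicInterior ℝ U) (hq : q ∈ U) : g q = g p := by
  obtain ⟨t, ht, htU⟩ := exists_one_lt_lineMap_mem_of_mem_intrinsicInterior hp hq
  have hbeyond : g p ≤ t * (g p - g q) + g q := by
    simpa only [AffineMap.apply_lineMap, AffineMap.lineMap_apply_ring'] using
      isMinOn_iff.mp hmin _ htU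
  have hpq : g p ≤ g q := isMinOn_iff.mp hmin q hq
  nlinarith

end IntrinsicInterior

theorem bddBelow_image_of_eqOn_affineMap {V : Type*} [NormedAddCommGroup V] [NormedSpace ℝ V]
    [FiniteDimensional ℝ V] {U : Set V} (hU : IsCompact U) {f : V → ℝ} {g : V →ᵃ[ℝ] ℝ}
    (hfg : EqOn f g U) : BddBelow (f '' U) :=
  hfg.image_eq ▸ (hU.image g.continuous_of_finiteDimensional).bddBelow

theorem csInf_image_le_csInf_image {α : Type*} {U : Set α} (hU : U.Nonempty) {f g : α → ℝ}
    (hf : BddBelow (f '' U)) (hfg : ∀ p ∈ U, f p ≤ g p) : sInf (f '' U) ≤ sInf (g '' U) :=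
  le_csInf (hU.image g) <| forall_mem_image.mpr fun p hp =>
    (csInf_le hf (mem_image_of_mem f hp)).trans (hfg p hp)

theorem aux_optimal_is_pro_general
    {V : Type*} [NormedAddCommGroup V] [InnerProductSpace ℝ V] [FiniteDimensional ℝ V]
    {X : Type*} (U : Set V) (hUcomp : IsCompact U)
    (f : X → V → ℝ)
    (haff : ∀ x : X, ∃ g : V →ᵃ[ℝ] ℝ, ∀ p ∈ U, f x p = g p)
    (phat : V) (hphat : phat ∈ intrinsicInterior ℝ U)
    (xstar : X)
    (hRO : ∀ x : X, sInf (f x '' U) ≤ sInf (f xstar '' U))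
    (ystar : X)
    (hfeas : ∀ p ∈ U, f xstar p ≤ f ystar p)
    (hopt : ∀ y : X, (∀ p ∈ U, f xstar p ≤ f y p) → f y phat ≤ f ystar phat) :
    (∀ x : X, sInf (f x '' U) ≤ sInf (f ystar '' U)) ∧
      ¬ ∃ y : X, (∀ p ∈ U, f ystar p ≤ f y p) ∧ ∃ pbar ∈ U, f ystar pbar < f y pbar := by
  have hphatU : phat ∈ U := intrinsicInterior_subset hphat
  refine ⟨fun x => (hRO x).trans ?_, ?_⟩
  · obtain ⟨g, hg⟩ := haff xstar
    exact csInf_image_le_csInf_image ⟨phat, hphatU⟩ (bddBelow_image_of_eqOn_affineMap hUcomp hg)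
      hfeas
  · rintro ⟨y, hdom, pbar, hpbar, hlt⟩
    have heq : f y phat = f ystar phat :=
      le_antisymm (hopt y fun p hp => (hfeas p hp).trans (hdom p hp)) (hdom phat hphatU)
    obtain ⟨gy, hgy⟩ := haff y
    obtain ⟨gs, hgs⟩ := haff ystar
    have hgap : ∀ p ∈ U, (gy - gs) p = f y p - f ystar p := fun p hp => by
      simp only [AffineMap.coe_sub, Pi.sub_apply, hgy p hp, hgs p hp]
    have hmin : IsMinOn (gy - gs) U phat := isMinOn_iff.mpr fun p hp => by
      simp only [hgap p hp, hgap phat hphatU, heq, sub_self, sub_nonneg, hdom p hp]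
    have hconst := (gy - gs).eq_of_isMinOn_of_mem_intrinsicInterior hmin hphat hpbar
    rw [hgap pbar hpbar, hgap phat hphatU, heq, sub_self, sub_eq_zero] at hconst
    exact hlt.ne' hconst

/-- Any optimal solution of the auxiliary problem
`max f(y,p̂) s.t. f(y,·) ≥ f(x*,·) on U` is Pareto robustly optimal. -/
theorem aux_optimal_is_pro
    {V : Type*} [NormedAddCommGroup V] [InnerProductSpace ℝ V] [FiniteDimensional ℝ V]
    {X : Type*} (U : Set V) (hUconv : Convex ℝ U) (hUcomp : IsCompact U)
    (f : X → V → ℝ)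
    (haff : ∀ x : X, ∃ g : V →ᵃ[ℝ] ℝ, ∀ p ∈ U, f x p = g p)
    (phat : V) (hphat : phat ∈ intrinsicInterior ℝ U)
    (xstar : X)
    (hRO : ∀ x : X, sInf (f x '' U) ≤ sInf (f xstar '' U))
    (ystar : X)
    (hfeas : ∀ p ∈ U, f xstar p ≤ f ystar p)
    (hopt : ∀ y : X, (∀ p ∈ U, f xstar p ≤ f y p) → f y phat ≤ f ystar phat) :
    (∀ x : X, sInf (f x '' U) ≤ sInf (f ystar '' U)) ∧
      ¬ ∃ y : X, (∀ p ∈ U, f ystar p ≤ f y p) ∧ ∃ pbar ∈ U, f ystar pbar < f y pbar :=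
  aux_optimal_is_pro_general U hUcomp f haff phat hphat xstar hRO ystar hfeas hopt
end

section
/- In the setting of the robust quadratic knapsack problem with R(p) = 𝟙𝟙ᵀ + E_{11}(p₁−1) + E_{22}(p₁−1) + E_{12}(p₂−1), U = {p ∈ ℝ² : p₁ ≥ 1, p₁² ≤ p₂, p₂ ≤ 4}, feasible set X = {x ∈ {0,1}^n : 𝟙ᵀx ≤ 5}, n ≥ 5: the solution x* = (1,1,1,1,1,0,…,0)ᵀ is Pareto robustly optimal; in particular, any x ∈ X with x₁ = x₂ = 1 and 𝟙ᵀx = 5 Pareto dominates every robustly optimal x ∈ X with x₁ = 0 or x₂ = 0. -/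
/-!
Write `f(x, p) = (𝟙ᵀx)² + (p₁ - 1)(x₁² + x₂²) + (p₂ - 1)x₁x₂`. On `U` both coefficients `p₁ - 1`
and `p₂ - 1` are nonnegative and vanish at `p = (1, 1)`, so the worst case of a binary `x` is
`(𝟙ᵀx)²` and the robustly optimal feasible points are exactly those with `𝟙ᵀx = 5`. Among these,
`x₁ = x₂ = 1` maximises both correction terms for every `p ∈ U`, and at `p = (2, 4)` it beats
strictly every `x` with `x₁ = 0` or `x₂ = 0`.
-/

open Matrix Finset

section QuadraticForm

variable {ι R : Type*} [Fintype ι] [CommSemiring R]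

lemma dotProduct_single_one_mulVec [DecidableEq ι] (i j : ι) (x : ι → R) :
    x ⬝ᵥ single i j (1 : R) *ᵥ x = x i * x j := by
  simp [single_mulVec_eq, dotProduct_single, mul_comm]

lemma dotProduct_of_one_mulVec (x : ι → R) :
    x ⬝ᵥ of (fun _ _ => (1 : R)) *ᵥ x = (∑ k, x k) ^ 2 := by
  simp [mulVec, dotProduct, ← sum_mul, sq]

end QuadraticForm

lemma sum_fin_ite_lt {n m : ℕ} (h : m ≤ n) :
    ∑ k : Fin n, (if (k : ℕ) < m then (1 : ℝ) else 0) = m := by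
  have hfilter : {k ∈ range n | k < m} = range m := by ext; simp; omega
  rw [Fin.sum_univ_eq_sum_range (fun k => if k < m then (1 : ℝ) else 0), sum_boole, hfilter,
    card_range]

namespace RobustKnapsack

variable {ι : Type*} [Fintype ι] (i j : ι)

def objective (p : Fin 2 → ℝ) (x : ι → ℝ) : ℝ :=
  (∑ k, x k) ^ 2 + (p 0 - 1) * (x i ^ 2 + x j ^ 2) + (p 1 - 1) * (x i * x j)

def uncertaintySet : Set (Fin 2 → ℝ) := {p | 1 ≤ p 0 ∧ p 0 ^ 2 ≤ p 1 ∧ p 1 ≤ 4}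

def feasibleSet (c : ℝ) : Set (ι → ℝ) := {x | (∀ k, x k = 0 ∨ x k = 1) ∧ ∑ k, x k ≤ c}

noncomputable def robustValue (x : ι → ℝ) : ℝ :=
  sInf {v | ∃ p ∈ uncertaintySet, v = objective i j p x}

def IsRobustOptimal (X : Set (ι → ℝ)) (x : ι → ℝ) : Prop :=
  ∀ y ∈ X, robustValue i j y ≤ robustValue i j x

def ParetoDominates (x y : ι → ℝ) : Prop :=
  (∀ p ∈ uncertaintySet, objective i j p y ≤ objective i j p x) ∧
    ∃ p ∈ uncertaintySet, objective i j p y < objective i j p x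

lemma dotProduct_mulVec_eq_objective [DecidableEq ι] (p : Fin 2 → ℝ) (x : ι → ℝ) :
    x ⬝ᵥ (of (fun _ _ => (1 : ℝ)) + (p 0 - 1) • single i i (1 : ℝ)
        + (p 0 - 1) • single j j (1 : ℝ)
        + (p 1 - 1) • ((1 / 2 : ℝ) • (single i j (1 : ℝ) + single j i (1 : ℝ)))) *ᵥ x
      = objective i j p x := by
  simp only [add_mulVec, smul_mulVec, dotProduct_add, dotProduct_smul,
    dotProduct_single_one_mulVec, dotProduct_of_one_mulVec, smul_eq_mul, objective]
  ring

lemma one_mem_uncertaintySet : (1 : Fin 2 → ℝ) ∈ uncertaintySet := by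
  norm_num [uncertaintySet]

lemma one_le_of_mem_uncertaintySet {p : Fin 2 → ℝ} (hp : p ∈ uncertaintySet) :
    1 ≤ p 0 ∧ 1 ≤ p 1 := by
  obtain ⟨hp0, hp1, -⟩ := hp
  exact ⟨hp0, by nlinarith⟩

lemma objective_one (x : ι → ℝ) : objective i j 1 x = (∑ k, x k) ^ 2 := by
  simp [objective]

variable {i j}

lemma sq_sum_le_objective {x : ι → ℝ} (hi : 0 ≤ x i) (hj : 0 ≤ x j) {p : Fin 2 → ℝ}
    (hp : p ∈ uncertaintySet) : (∑ k, x k) ^ 2 ≤ objective i j p x := by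
  obtain ⟨hp0, hp1⟩ := one_le_of_mem_uncertaintySet hp
  have h₁ : 0 ≤ (p 0 - 1) * (x i ^ 2 + x j ^ 2) := by
    apply mul_nonneg <;> [linarith; positivity]
  have h₂ : 0 ≤ (p 1 - 1) * (x i * x j) := mul_nonneg (by linarith) (mul_nonneg hi hj)
  unfold objective
  linarith

lemma robustValue_eq {x : ι → ℝ} (hi : 0 ≤ x i) (hj : 0 ≤ x j) :
    robustValue i j x = (∑ k, x k) ^ 2 :=
  IsLeast.csInf_eq
    ⟨⟨1, one_mem_uncertaintySet, (objective_one i j x).symm⟩,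
      by rintro v ⟨p, hp, rfl⟩; exact sq_sum_le_objective hi hj hp⟩

section Feasible

variable {c : ℝ} {x y : ι → ℝ}

lemma mem_Icc_of_mem_feasibleSet (hx : x ∈ feasibleSet c) (k : ι) : x k ∈ Set.Icc 0 1 := by
  rcases hx.1 k with h | h <;> simp [h]

lemma sum_nonneg_of_mem_feasibleSet (hx : x ∈ feasibleSet c) : 0 ≤ ∑ k, x k :=
  sum_nonneg fun k _ => (mem_Icc_of_mem_feasibleSet hx k).1

lemma robustValue_eq_of_mem_feasibleSet (hx : x ∈ feasibleSet c) :
    robustValue i j x = (∑ k, x k) ^ 2 :=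
  robustValue_eq (mem_Icc_of_mem_feasibleSet hx i).1 (mem_Icc_of_mem_feasibleSet hx j).1

lemma sum_eq_of_sq_le (hx : x ∈ feasibleSet c) (h : c ^ 2 ≤ (∑ k, x k) ^ 2) :
    ∑ k, x k = c := by
  have := sum_nonneg_of_mem_feasibleSet hx
  nlinarith [hx.2]

lemma isRobustOptimal_of_sum_eq (hx : x ∈ feasibleSet c) (hsum : ∑ k, x k = c) :
    IsRobustOptimal i j (feasibleSet c) x := by
  intro y hy
  rw [robustValue_eq_of_mem_feasibleSet hy, robustValue_eq_of_mem_feasibleSet hx, hsum]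
  exact pow_le_pow_left₀ (sum_nonneg_of_mem_feasibleSet hy) hy.2 2

lemma IsRobustOptimal.sum_eq (hy : y ∈ feasibleSet c)
    (hopt : IsRobustOptimal i j (feasibleSet c) y) (hx : x ∈ feasibleSet c)
    (hsum : ∑ k, x k = c) : ∑ k, y k = c := by
  apply sum_eq_of_sq_le hy
  have := hopt x hx
  rwa [robustValue_eq_of_mem_feasibleSet hx, robustValue_eq_of_mem_feasibleSet hy, hsum] at this

lemma objective_le_of_sum_eq (hy : y ∈ feasibleSet c) (hxi : x i = 1) (hxj : x j = 1)
    (hsum : ∑ k, y k = ∑ k, x k) {p : Fin 2 → ℝ} (hp : p ∈ uncertaintySet) :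
    objective i j p y ≤ objective i j p x := by
  obtain ⟨hp0, hp1⟩ := one_le_of_mem_uncertaintySet hp
  obtain ⟨hyi₀, hyi₁⟩ := mem_Icc_of_mem_feasibleSet hy i
  obtain ⟨hyj₀, hyj₁⟩ := mem_Icc_of_mem_feasibleSet hy j
  have h₁ : (p 0 - 1) * (y i ^ 2 + y j ^ 2) ≤ (p 0 - 1) * 2 :=
    mul_le_mul_of_nonneg_left (by nlinarith) (by linarith)
  have h₂ : (p 1 - 1) * (y i * y j) ≤ (p 1 - 1) * 1 :=
    mul_le_mul_of_nonneg_left (by nlinarith) (by linarith)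
  simp only [objective, hsum, hxi, hxj]
  linarith

lemma objective_lt_of_sum_eq (hy : y ∈ feasibleSet c) (hxi : x i = 1) (hxj : x j = 1)
    (hsum : ∑ k, y k = ∑ k, x k) (hyij : y i = 0 ∨ y j = 0) {p : Fin 2 → ℝ}
    (hp : p ∈ uncertaintySet) (hp0 : 1 < p 0) :
    objective i j p y < objective i j p x := by
  have hp1 := (one_le_of_mem_uncertaintySet hp).2
  obtain ⟨hyi₀, hyi₁⟩ := mem_Icc_of_mem_feasibleSet hy i
  obtain ⟨hyj₀, hyj₁⟩ := mem_Icc_of_mem_feasibleSet hy j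
  have hprod : y i * y j = 0 := by rcases hyij with h | h <;> simp [h]
  have hsq : y i ^ 2 + y j ^ 2 < 2 := by rcases hyij with h | h <;> simp [h] <;> nlinarith
  have h₁ : (p 0 - 1) * (y i ^ 2 + y j ^ 2) < (p 0 - 1) * 2 :=
    mul_lt_mul_of_pos_left hsq (by linarith)
  simp only [objective, hsum, hxi, hxj, hprod]
  nlinarith

lemma paretoDominates_of_sum_eq (hy : y ∈ feasibleSet c) (hxi : x i = 1) (hxj : x j = 1)
    (hsum : ∑ k, y k = ∑ k, x k) (hyij : y i = 0 ∨ y j = 0) : ParetoDominates i j x y :=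
  ⟨fun _ hp => objective_le_of_sum_eq hy hxi hxj hsum hp,
    ![2, 4], by norm_num [uncertaintySet],
    objective_lt_of_sum_eq hy hxi hxj hsum hyij (by norm_num [uncertaintySet]) (by norm_num)⟩

lemma not_paretoDominates (hxi : x i = 1) (hxj : x j = 1) (hsum : ∑ k, x k = c) :
    ¬ ∃ y ∈ feasibleSet c, ParetoDominates i j y x := by
  rintro ⟨y, hy, hdom, p, hp, hlt⟩
  have hysum : ∑ k, y k = c := by
    apply sum_eq_of_sq_le hy
    simpa only [objective_one, hsum] using hdom 1 one_mem_uncertaintySet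
  exact (objective_le_of_sum_eq hy hxi hxj (hysum.trans hsum.symm) hp).not_gt hlt

end Feasible

end RobustKnapsack

/-- In the robust quadratic knapsack example (indices 1,2 encoded as
`0, 1 : Fin n`), the solution `x* = (1,1,1,1,1,0,…,0)` is Pareto robustly optimal;
moreover any feasible `x` with `x₁ = x₂ = 1` and `𝟙ᵀx = 5` Pareto dominates every
robustly optimal feasible `x` with `x₁ = 0` or `x₂ = 0`. -/
theorem knapsack_pro
    {n : ℕ} (hn : 5 ≤ n)
    (R : (Fin 2 → ℝ) → Matrix (Fin n) (Fin n) ℝ)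
    (hR : ∀ p, R p = (Matrix.of fun _ _ => (1:ℝ))
        + (p 0 - 1) • Matrix.single (⟨0, by omega⟩ : Fin n) (⟨0, by omega⟩ : Fin n) (1:ℝ)
        + (p 0 - 1) • Matrix.single (⟨1, by omega⟩ : Fin n) (⟨1, by omega⟩ : Fin n) (1:ℝ)
        + (p 1 - 1) • ((1/2 : ℝ) •
            (Matrix.single (⟨0, by omega⟩ : Fin n) (⟨1, by omega⟩ : Fin n) (1:ℝ)
              + Matrix.single (⟨1, by omega⟩ : Fin n) (⟨0, by omega⟩ : Fin n) (1:ℝ))))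
    (U : Set (Fin 2 → ℝ))
    (hU : U = {p : Fin 2 → ℝ | 1 ≤ p 0 ∧ (p 0)^2 ≤ p 1 ∧ p 1 ≤ 4})
    (Xset : Set (Fin n → ℝ))
    (hXset : Xset = {x : Fin n → ℝ | (∀ k, x k = 0 ∨ x k = 1) ∧ ∑ k, x k ≤ 5})
    (xstar : Fin n → ℝ) (hxstar : ∀ k : Fin n, xstar k = if (k : ℕ) < 5 then (1:ℝ) else 0) :
    -- x* is Pareto robustly optimal
    (xstar ∈ Xset
      ∧ (∀ y ∈ Xset, sInf {v : ℝ | ∃ p ∈ U, v = y ⬝ᵥ (R p).mulVec y}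
            ≤ sInf {v : ℝ | ∃ p ∈ U, v = xstar ⬝ᵥ (R p).mulVec xstar})
      ∧ ¬ ∃ y ∈ Xset, (∀ p ∈ U, xstar ⬝ᵥ (R p).mulVec xstar ≤ y ⬝ᵥ (R p).mulVec y)
            ∧ ∃ pbar ∈ U, xstar ⬝ᵥ (R pbar).mulVec xstar < y ⬝ᵥ (R pbar).mulVec y)
    ∧
    -- any feasible x with x₁ = x₂ = 1 and 𝟙ᵀx = 5 dominates every robustly optimal
    -- feasible x' with x'₁ = 0 or x'₂ = 0
    (∀ x ∈ Xset, x ⟨0, by omega⟩ = 1 → x ⟨1, by omega⟩ = 1 → ∑ k, x k = 5 →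
      ∀ x' ∈ Xset,
        (∀ y ∈ Xset, sInf {v : ℝ | ∃ p ∈ U, v = y ⬝ᵥ (R p).mulVec y}
            ≤ sInf {v : ℝ | ∃ p ∈ U, v = x' ⬝ᵥ (R p).mulVec x'}) →
        (x' ⟨0, by omega⟩ = 0 ∨ x' ⟨1, by omega⟩ = 0) →
        ((∀ p ∈ U, x' ⬝ᵥ (R p).mulVec x' ≤ x ⬝ᵥ (R p).mulVec x)
          ∧ ∃ pbar ∈ U, x' ⬝ᵥ (R pbar).mulVec x' < x ⬝ᵥ (R pbar).mulVec x)) := by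
  have hf : ∀ p x,
      x ⬝ᵥ R p *ᵥ x = RobustKnapsack.objective (⟨0, by omega⟩ : Fin n) ⟨1, by omega⟩ p x :=
    fun p x => by rw [hR]; exact RobustKnapsack.dotProduct_mulVec_eq_objective _ _ p x
  simp only [hf]
  subst hU hXset
  have hstar_sum : ∑ k, xstar k = 5 := by
    simp only [hxstar]; exact_mod_cast sum_fin_ite_lt hn
  have hstar : xstar ∈ RobustKnapsack.feasibleSet 5 :=
    ⟨fun k => by rw [hxstar k]; split_ifs <;> simp, hstar_sum.le⟩
  have hstar₀ : xstar ⟨0, by omega⟩ = 1 := by simp [hxstar]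
  have hstar₁ : xstar ⟨1, by omega⟩ = 1 := by simp [hxstar]
  refine ⟨⟨hstar, RobustKnapsack.isRobustOptimal_of_sum_eq hstar hstar_sum,
    RobustKnapsack.not_paretoDominates hstar₀ hstar₁ hstar_sum⟩, ?_⟩
  intro x hx hx₀ hx₁ hxsum y hy hopt hy₀₁
  have hysum : ∑ k, y k = 5 := RobustKnapsack.IsRobustOptimal.sum_eq hy hopt hx hxsum
  exact RobustKnapsack.paretoDominates_of_sum_eq hy hx₀ hx₁ (hysum.trans hxsum.symm) hy₀₁
end

section
/- Let U = {I₂ + μA : μ ∈ [0,1]} where A = [[1,−1],[−1,1]], and let X = {X ∈ S² : X ⪰ 0, Tr(X) = 1}. Then: (1) every X ∈ X is robustly optimal for max_{X∈X} min_{C∈U} ⟨C,X⟩ with robust value 1; (2) X' = ½A Pareto dominates every other X ∈ X, i.e., for every μ ∈ (0,1] and every feasible X ≠ X', ⟨I₂ + μA, X⟩ < ⟨I₂ + μA, X'⟩. -/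
open Matrix

/-!
With `v = (1, -1)` we have `A = v vᵀ`, so `Tr((I + μA) X) = Tr X + μ vᵀXv`, and `vᵀXv ≥ 0` for
`X ⪰ 0`: the robust value is `1`, attained at `μ = 0`. With `w = (1, 1)`, `v vᵀ + w wᵀ = 2I`
gives `vᵀXv = 2 Tr X - wᵀXw ≤ 2`. Equality forces `wᵀXw = 0`, hence `Xw = 0` since `X ⪰ 0`,
and together with `Tr X = 1` this pins down `X = ½A`.
-/

namespace Matrix

section CommSemiring

variable {n R : Type*} [Fintype n] [CommSemiring R]

theorem trace_vecMulVec_self_mul (v : n → R) (X : Matrix n n R) :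
    (vecMulVec v v * X).trace = v ⬝ᵥ X *ᵥ v := by
  rw [vecMulVec_mul, trace_vecMulVec, dotProduct_mulVec, dotProduct_comm]

theorem trace_one_add_smul_vecMulVec_mul [DecidableEq n] (μ : R) (v : n → R) (X : Matrix n n R) :
    ((1 + μ • vecMulVec v v) * X).trace = X.trace + μ * (v ⬝ᵥ X *ᵥ v) := by
  rw [add_mul, one_mul, smul_mul, trace_add, trace_smul, trace_vecMulVec_self_mul, smul_eq_mul]

end CommSemiring

theorem isLeast_trace_one_add_smul_vecMulVec_mul {n : Type*} [Fintype n] [DecidableEq n]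
    (v : n → ℝ) {X : Matrix n n ℝ} (hX : X.PosSemidef) (htr : X.trace = 1) :
    IsLeast {t : ℝ | ∃ C ∈ {C : Matrix n n ℝ | ∃ μ : ℝ, μ ∈ Set.Icc (0:ℝ) 1 ∧
        C = 1 + μ • vecMulVec v v}, t = (C * X).trace} 1 := by
  refine ⟨⟨1, ⟨0, ⟨le_rfl, zero_le_one⟩, by simp⟩, by simp [htr]⟩, ?_⟩
  rintro _ ⟨_, ⟨μ, ⟨hμ, -⟩, rfl⟩, rfl⟩
  have hq : 0 ≤ v ⬝ᵥ X *ᵥ v := by simpa using hX.dotProduct_mulVec_nonneg v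
  rw [trace_one_add_smul_vecMulVec_mul, htr]
  nlinarith

theorem vecMulVec_one_neg_one :
    vecMulVec ![1, -1] ![1, -1] = !![(1 : ℝ), -1; -1, 1] := by
  ext i j
  fin_cases i <;> fin_cases j <;> simp [vecMulVec_apply]

theorem dotProduct_mulVec_add_dotProduct_mulVec_fin_two (X : Matrix (Fin 2) (Fin 2) ℝ) :
    ![1, -1] ⬝ᵥ X *ᵥ ![1, -1] + ![1, 1] ⬝ᵥ X *ᵥ ![1, 1] = 2 * X.trace := by
  simp [dotProduct, mulVec, Fin.sum_univ_two, trace_fin_two]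
  ring

theorem eq_of_isHermitian_of_mulVec_one_one_eq_zero {X : Matrix (Fin 2) (Fin 2) ℝ}
    (hX : X.IsHermitian) (htr : X.trace = 1) (hw : X *ᵥ ![1, 1] = 0) :
    X = (1 / 2 : ℝ) • !![1, -1; -1, 1] := by
  have hsym : X 1 0 = X 0 1 := by simpa using congrFun (congrFun hX 0) 1
  have h0 : X 0 0 + X 0 1 = 0 := by simpa [mulVec, dotProduct] using congrFun hw 0
  have h1 : X 1 0 + X 1 1 = 0 := by simpa [mulVec, dotProduct] using congrFun hw 1
  rw [trace_fin_two] at htr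
  ext i j
  fin_cases i <;> fin_cases j <;> simp <;> linarith

theorem dotProduct_mulVec_one_neg_one_lt_two {X : Matrix (Fin 2) (Fin 2) ℝ}
    (hX : X.PosSemidef) (htr : X.trace = 1) (hne : X ≠ (1 / 2 : ℝ) • !![1, -1; -1, 1]) :
    ![1, -1] ⬝ᵥ X *ᵥ ![1, -1] < 2 := by
  have hsum := dotProduct_mulVec_add_dotProduct_mulVec_fin_two X
  have hw : 0 < ![1, 1] ⬝ᵥ X *ᵥ ![1, 1] := by
    refine lt_of_le_of_ne (by simpa using hX.dotProduct_mulVec_nonneg ![1, 1]) fun h ↦ hne ?_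
    refine eq_of_isHermitian_of_mulVec_one_one_eq_zero hX.isHermitian htr ?_
    exact (hX.dotProduct_mulVec_zero_iff _).1 (by simpa using h.symm)
  linarith

end Matrix

/-- For `U = {I₂ + μA : μ ∈ [0,1]}` with `A = [[1,-1],[-1,1]]` and the
spectrahedron `{X ⪰ 0, Tr X = 1}`: every feasible `X` is robustly optimal with robust
value 1, and `X' = ½A` Pareto dominates every other feasible solution. -/
theorem robust_eigenvalue_example
    (A : Matrix (Fin 2) (Fin 2) ℝ) (hA : A = !![1, -1; -1, 1])
    (U : Set (Matrix (Fin 2) (Fin 2) ℝ))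
    (hU : U = {C : Matrix (Fin 2) (Fin 2) ℝ | ∃ μ : ℝ, μ ∈ Set.Icc (0:ℝ) 1 ∧
        C = 1 + μ • A})
    (Xset : Set (Matrix (Fin 2) (Fin 2) ℝ))
    (hXset : Xset = {X : Matrix (Fin 2) (Fin 2) ℝ | X.PosSemidef ∧ X.trace = 1}) :
    -- (1) every feasible X is robustly optimal with robust value 1
    (∀ X ∈ Xset, IsLeast {v : ℝ | ∃ C ∈ U, v = (C * X).trace} 1)
    ∧
    -- (2) X' = ½ A Pareto dominates every other feasible solution
    (∀ μ : ℝ, μ ∈ Set.Ioc (0:ℝ) 1 → ∀ X ∈ Xset, X ≠ (1/2 : ℝ) • A →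
      ((1 + μ • A) * X).trace < ((1 + μ • A) * ((1/2 : ℝ) • A)).trace) := by
  subst hU hXset
  rw [hA, ← vecMulVec_one_neg_one]
  refine ⟨fun X ⟨hX, htr⟩ ↦ isLeast_trace_one_add_smul_vecMulVec_mul _ hX htr, ?_⟩
  rintro μ ⟨hμ, -⟩ X ⟨hX, htr⟩ hne
  have hlt := dotProduct_mulVec_one_neg_one_lt_two hX htr (vecMulVec_one_neg_one ▸ hne)
  have hopt : ((1 + μ • vecMulVec ![(1 : ℝ), -1] ![1, -1]) *
      ((1 / 2 : ℝ) • vecMulVec ![1, -1] ![1, -1])).trace = 1 + μ * 2 := by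
    rw [trace_one_add_smul_vecMulVec_mul]
    norm_num [trace_fin_two, dotProduct, mulVec, Fin.sum_univ_two]
  rw [hopt, trace_one_add_smul_vecMulVec_mul, htr]
  gcongr
end

section
/- Let X ⊆ {0,1}^n, f(x,p) = pᵀx, U = [p̄ − Δp, p̄] with Δp ≥ 0, and let x* ∈ X be robustly optimal. For z ∈ {−1,0,1}^n with x* + z ∈ {0,1}^n, the point x* + z Pareto dominates x* if and only if: (i) x* + z is robustly optimal, (ii) every index i with z_i = −1 satisfies Δp_i = 0, and (iii) there is at least one index i with z_i = 1 and Δp_i > 0. -/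
/-! Write `q = p̄ − Δp` for the lower corner of the box. On nonnegative points the worst case
of `p ↦ pᵀx` over the box is `qᵀx`, so robust optimality of `x*` gives `qᵀz ≤ 0`, and
`x* + z` is robustly optimal exactly when `qᵀz = 0`. Pareto domination asks `pᵀz ≥ 0` on
the whole box and `pᵀz > 0` somewhere. Once `qᵀz = 0`, moving a single coordinate of `q` to
the top of its interval shows that `pᵀz ≥ 0` on the box forces every coordinate with
`z_i < 0` to have a degenerate interval, while a strictly positive value somewhere needs a
coordinate with `z_i > 0` and a nondegenerate interval; conversely these two conditions
make `pᵀz ≥ qᵀz` on the box, with strict inequality at `p̄`. -/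

open Set Finset

section Box

variable {ι : Type*} {lo hi p x z : ι → ℝ}

theorem add_single_mem_Icc [DecidableEq ι] (hle : lo ≤ hi) (i : ι) :
    lo + Pi.single i (hi i - lo i) ∈ Icc lo hi := by
  refine ⟨le_add_of_nonneg_right (Pi.single_nonneg.2 (sub_nonneg.2 (hle i))), fun j => ?_⟩
  rcases eq_or_ne j i with rfl | hj
  · simp
  · simpa [hj] using hle j

variable [Fintype ι]

theorem sInf_dotProduct_Icc (hle : lo ≤ hi) (hx : 0 ≤ x) :
    sInf {v | ∃ p ∈ Icc lo hi, v = p ⬝ᵥ x} = lo ⬝ᵥ x :=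
  IsLeast.csInf_eq
    ⟨⟨lo, left_mem_Icc.2 hle, rfl⟩, by
      rintro _ ⟨p, hp, rfl⟩
      exact dotProduct_le_dotProduct_of_nonneg_right hp.1 hx⟩

theorem mul_le_mul_of_mem_Icc {a b c t : ℝ} (hb : b ∈ Icc a c) (h : t < 0 → a = c) :
    a * t ≤ b * t := by
  rcases lt_or_ge t 0 with ht | ht
  · obtain rfl := h ht
    rw [le_antisymm hb.2 hb.1]
  · exact mul_le_mul_of_nonneg_right hb.1 ht

theorem le_dotProduct_of_mem_Icc (h : ∀ i, z i < 0 → lo i = hi i)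
    (hp : p ∈ Icc lo hi) : lo ⬝ᵥ z ≤ p ⬝ᵥ z :=
  Finset.sum_le_sum fun i _ => mul_le_mul_of_mem_Icc ⟨hp.1 i, hp.2 i⟩ (h i)

theorem dotProduct_le_of_mem_Icc (h : ∀ i, 0 < z i → lo i = hi i)
    (hp : p ∈ Icc lo hi) : p ⬝ᵥ z ≤ lo ⬝ᵥ z := by
  simpa only [dotProduct_neg, neg_le_neg_iff] using
    le_dotProduct_of_mem_Icc (z := -z) (fun i hi => h i (by simpa using hi)) hp

theorem dotProduct_lt_dotProduct_of_lt_of_pos (hle : lo ≤ hi) (h : ∀ i, z i < 0 → lo i = hi i)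
    (hpos : ∃ i, 0 < z i ∧ lo i < hi i) : lo ⬝ᵥ z < hi ⬝ᵥ z := by
  obtain ⟨j, hzj, hj⟩ := hpos
  exact Finset.sum_lt_sum (fun i _ => mul_le_mul_of_mem_Icc ⟨hle i, le_rfl⟩ (h i))
    ⟨j, mem_univ j, mul_lt_mul_of_pos_right hj hzj⟩

theorem pareto_direction_iff (hle : lo ≤ hi) (hz : lo ⬝ᵥ z ≤ 0) :
    ((∀ p ∈ Icc lo hi, 0 ≤ p ⬝ᵥ z) ∧ ∃ p ∈ Icc lo hi, 0 < p ⬝ᵥ z) ↔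
      0 ≤ lo ⬝ᵥ z ∧ (∀ i, z i < 0 → lo i = hi i) ∧ ∃ i, 0 < z i ∧ lo i < hi i := by
  classical
  constructor
  · rintro ⟨hnonneg, p, hp, hpos⟩
    have hlo : lo ⬝ᵥ z = 0 := le_antisymm hz (hnonneg lo (left_mem_Icc.2 hle))
    refine ⟨hlo.ge, fun i hzi => ?_, ?_⟩
    · have hval : 0 ≤ (hi i - lo i) * z i := by
        simpa [add_dotProduct, single_dotProduct, hlo] using
          hnonneg _ (add_single_mem_Icc hle i)
      exact le_antisymm (hle i) (sub_nonpos.1 (nonpos_of_mul_nonneg_left hval hzi))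
    · by_contra! hdeg
      have := dotProduct_le_of_mem_Icc
        (fun i hzi => le_antisymm (hle i) (hdeg i hzi)) hp
      linarith
  · rintro ⟨hlo, hdeg, hpos⟩
    exact ⟨fun p hp => hlo.trans (le_dotProduct_of_mem_Icc hdeg hp),
      hi, right_mem_Icc.2 hle, hlo.trans_lt (dotProduct_lt_dotProduct_of_lt_of_pos hle hdeg hpos)⟩

end Box

theorem neg_iff_eq_neg_one_of_trit {t : ℝ} (ht : t = -1 ∨ t = 0 ∨ t = 1) : t < 0 ↔ t = -1 := by
  rcases ht with rfl | rfl | rfl <;> norm_num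

theorem pos_iff_eq_one_of_trit {t : ℝ} (ht : t = -1 ∨ t = 0 ∨ t = 1) : 0 < t ↔ t = 1 := by
  rcases ht with rfl | rfl | rfl <;> norm_num

/-- For binary `X ⊆ {0,1}^n`, `f(x,p) = pᵀx`, and interval uncertainty
`U = [p̄ − Δp, p̄]`, a robustly optimal `x*` is Pareto dominated by `x* + z`,
`z ∈ {−1,0,1}^n`, iff (i) `x*+z` is robustly optimal, (ii) `z_i = −1 ⟹ Δp_i = 0`,
and (iii) some `i` has `z_i = 1` and `Δp_i > 0`. -/
theorem interval_pareto_domination_characterization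
    {n : ℕ} (pbar Δp : Fin n → ℝ) (hΔp : ∀ i, 0 ≤ Δp i)
    (U : Set (Fin n → ℝ))
    (hU : U = {u : Fin n → ℝ | ∀ i, pbar i - Δp i ≤ u i ∧ u i ≤ pbar i})
    (Xset : Set (Fin n → ℝ))
    (hbin : ∀ x ∈ Xset, ∀ i, x i = 0 ∨ x i = 1)
    (xstar : Fin n → ℝ) (hxstar : xstar ∈ Xset)
    (hRO : ∀ x ∈ Xset, sInf {v : ℝ | ∃ p ∈ U, v = ∑ i, p i * x i}
        ≤ sInf {v : ℝ | ∃ p ∈ U, v = ∑ i, p i * xstar i})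
    (z : Fin n → ℝ) (hz : ∀ i, z i = -1 ∨ z i = 0 ∨ z i = 1)
    (hmem : xstar + z ∈ Xset) :
    -- x* + z Pareto dominates x* …
    ((∀ p ∈ U, ∑ i, p i * xstar i ≤ ∑ i, p i * (xstar + z) i)
        ∧ ∃ pbar' ∈ U, ∑ i, pbar' i * xstar i < ∑ i, pbar' i * (xstar + z) i)
    ↔
    -- … iff (i) x*+z robustly optimal, (ii) z_i = −1 ⟹ Δp_i = 0,
    -- (iii) some i has z_i = 1 and Δp_i > 0
    ((∀ x ∈ Xset, sInf {v : ℝ | ∃ p ∈ U, v = ∑ i, p i * x i}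
          ≤ sInf {v : ℝ | ∃ p ∈ U, v = ∑ i, p i * (xstar + z) i})
      ∧ (∀ i, z i = -1 → Δp i = 0)
      ∧ (∃ i, z i = 1 ∧ 0 < Δp i)) := by
  obtain rfl : U = Icc (pbar - Δp) pbar := by
    ext u; simp [hU, Pi.le_def, forall_and]
  set q := pbar - Δp with hq
  have hle : q ≤ pbar := fun i => sub_le_self _ (hΔp i)
  have hval : ∀ x ∈ Xset, sInf {v | ∃ p ∈ Icc q pbar, v = p ⬝ᵥ x} = q ⬝ᵥ x :=
    fun x hx => sInf_dotProduct_Icc hle fun i => by rcases hbin x hx i with h | h <;> simp [h]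
  simp only [← dotProduct.eq_1] at hRO ⊢
  have hRO' : ∀ x ∈ Xset, q ⬝ᵥ x ≤ q ⬝ᵥ xstar := fun x hx => by
    simpa only [hval x hx, hval xstar hxstar] using hRO x hx
  have hopt : (∀ x ∈ Xset, sInf {v | ∃ p ∈ Icc q pbar, v = p ⬝ᵥ x} ≤
      sInf {v | ∃ p ∈ Icc q pbar, v = p ⬝ᵥ (xstar + z)}) ↔ 0 ≤ q ⬝ᵥ z := by
    refine ⟨fun h => ?_, fun h x hx => ?_⟩
    · have := h xstar hxstar
      rw [hval _ hxstar, hval _ hmem, dotProduct_add] at this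
      linarith
    · rw [hval x hx, hval _ hmem, dotProduct_add]
      linarith [hRO' x hx]
  have hdrop : q ⬝ᵥ z ≤ 0 := by
    simpa [dotProduct_add] using hRO' _ hmem
  rw [hopt]
  simp only [dotProduct_add, le_add_iff_nonneg_right, lt_add_iff_pos_right]
  rw [pareto_direction_iff hle hdrop]
  simp only [fun i => neg_iff_eq_neg_one_of_trit (hz i), fun i => pos_iff_eq_one_of_trit (hz i),
    hq, Pi.sub_apply, sub_eq_self, sub_lt_self_iff]
end
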